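/- arXiv:1611.10081 — 2 statements merged into one kernel-verified Lean document; each statement's English description precedes it below -/
import Mathlib

section
/- Fix R > 0 and for integers k ≥ 2 define γ_k(R) := j_k(R)·R/(h_k(R) + j_k(R)). Then γ_k(R) > 0 for every k ≥ 2, and lim_{k→∞} γ_k(R) = 0. -/
/-- The modified Bessel function of the first kind of order `m`:
`I_m(r) = ∑ (r/2)^(m+2n) / (n! Γ(m+n+1))`. -/
noncomputable def besselI (m r : ℝ) : ℝ :=
  ∑' n : ℕ, (r / 2) ^ (m + 2 * (n : ℝ)) / ((n.factorial : ℝ) * Real.Gamma (m + (n : ℝ) + 1))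

/-- `h_k(R) = ((k²+k)/2 - 1)·I_{k+3/2}(R)/(R·I_{k+1/2}(R))`. -/
noncomputable def hfun (k : ℕ) (R : ℝ) : ℝ :=
  (((k : ℝ) ^ 2 + k) / 2 - 1) * (besselI ((k : ℝ) + 3 / 2) R / (R * besselI ((k : ℝ) + 1 / 2) R))

/-- `j_k(R) = 1 - 3 I_{3/2}(R)/(R I_{1/2}(R)) - I_{3/2}(R) I_{k+3/2}(R)/(I_{1/2}(R) I_{k+1/2}(R))`. -/
noncomputable def jfun (k : ℕ) (R : ℝ) : ℝ :=
  1 - 3 * besselI (3 / 2) R / (R * besselI (1 / 2) R)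
    - besselI (3 / 2) R * besselI ((k : ℝ) + 3 / 2) R
      / (besselI (1 / 2) R * besselI ((k : ℝ) + 1 / 2) R)

/-- `γ_k(R) = j_k(R)·R/(h_k(R) + j_k(R))`. -/
noncomputable def gammafun (k : ℕ) (R : ℝ) : ℝ :=
  jfun k R * R / (hfun k R + jfun k R)

/-!
The three-term recurrence `R I_{1/2} = R I_{5/2} + 3 I_{3/2}` turns `j_k(R)` into
`(I_{5/2} I_{k+1/2} - I_{3/2} I_{k+3/2}) / (I_{1/2} I_{k+1/2})`. Multiplying two Bessel series
and summing each antidiagonal with the Chu–Vandermonde identity gives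
`I_μ I_ν = ∑_N (R/2)^(μ+ν+2N) C(μ+ν+2N, N) / (Γ(μ+N+1) Γ(ν+N+1))`, and comparing these series
term by term yields `I_μ I_{ν+1} < I_{μ+1} I_ν` for `μ < ν`; with `μ = 3/2`, `ν = k + 1/2` this is
`j_k > 0` for `k ≥ 2`. As `0 < j_k < 1`, `γ_k ≤ R / h_k`, and bounding `I_{k+3/2}` below by its
first term and `I_{k+1/2}` above by its first term times `exp (R²/4)` shows that `h_k` grows
linearly in `k`.
-/

open Filter Finset

lemma Real.Gamma_add_nat_eq_ascPochhammer_mul {a : ℝ} (ha : 0 < a) (k : ℕ) :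
    Real.Gamma (a + k) = (ascPochhammer ℝ k).eval a * Real.Gamma a := by
  induction k with
  | zero => simp
  | succ k ih =>
    rw [Nat.cast_succ, ← add_assoc, Real.Gamma_add_one (by positivity), ih, ascPochhammer_succ_eval]
    ring

lemma Real.Gamma_add_nat_eq_factorial_mul_choose {a : ℝ} (ha : 0 < a) (k : ℕ) :
    Real.Gamma (a + k) = k.factorial * Ring.choose (a + k - 1) k * Real.Gamma a := by
  rw [← Ring.multichoose_eq, ← nsmul_eq_mul, Ring.factorial_nsmul_multichoose_eq_ascPochhammer,
    Polynomial.ascPochhammer_smeval_eq_eval, Real.Gamma_add_nat_eq_ascPochhammer_mul ha]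

lemma Real.choose_pos_of_sub_one_lt {x : ℝ} {k : ℕ} (hx : (k : ℝ) - 1 < x) :
    0 < Ring.choose x k := by
  have ha : 0 < x - k + 1 := by linarith
  have hΓ := Real.Gamma_add_nat_eq_factorial_mul_choose ha k
  rw [show x - k + 1 + k - 1 = x by ring, show x - k + 1 + k = x + 1 by ring] at hΓ
  have h1 : 0 < Real.Gamma (x + 1) := Real.Gamma_pos_of_pos (by linarith)
  have h2 : 0 < Real.Gamma (x - k + 1) := Real.Gamma_pos_of_pos ha
  have h3 : (0 : ℝ) < k.factorial := by positivity
  rw [hΓ] at h1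
  exact pos_of_mul_pos_right (pos_of_mul_pos_left h1 h2.le) h3.le

lemma Real.Gamma_le_Gamma_add_nat {a : ℝ} (ha : 1 ≤ a) (n : ℕ) :
    Real.Gamma a ≤ Real.Gamma (a + n) := by
  induction n with
  | zero => simp
  | succ n ih =>
    have hΓ : 0 ≤ Real.Gamma (a + n) := (Real.Gamma_pos_of_pos (by positivity)).le
    rw [Nat.cast_succ, ← add_assoc, Real.Gamma_add_one (s := a + n) (by positivity)]
    nlinarith

lemma Real.rpow_add_two_mul {y : ℝ} (hy : 0 < y) (m : ℝ) (n : ℕ) :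
    y ^ (m + 2 * (n : ℝ)) = y ^ m * (y ^ 2) ^ n := by
  rw [Real.rpow_add hy, Real.rpow_mul hy.le, Real.rpow_two, Real.rpow_natCast]

noncomputable def besselITerm (m r : ℝ) (n : ℕ) : ℝ :=
  (r / 2) ^ (m + 2 * (n : ℝ)) / ((n.factorial : ℝ) * Real.Gamma (m + (n : ℝ) + 1))

lemma besselI_eq_tsum (m r : ℝ) : besselI m r = ∑' n, besselITerm m r n := rfl

section

variable {R m : ℝ}

lemma besselITerm_pos (hR : 0 < R) (hm : 0 ≤ m) (n : ℕ) : 0 < besselITerm m R n := by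
  have := Real.Gamma_pos_of_pos (show 0 < m + n + 1 by positivity)
  unfold besselITerm
  positivity

lemma besselITerm_zero (m R : ℝ) : besselITerm m R 0 = (R / 2) ^ m / Real.Gamma (m + 1) := by
  simp [besselITerm]

lemma besselITerm_le (hR : 0 < R) (hm : 0 ≤ m) (n : ℕ) :
    besselITerm m R n ≤ (R / 2) ^ m / Real.Gamma (m + 1) * (((R / 2) ^ 2) ^ n / n.factorial) := by
  have hΓ : 0 < Real.Gamma (m + 1) := Real.Gamma_pos_of_pos (by linarith)
  rw [besselITerm, Real.rpow_add_two_mul (by positivity), div_mul_div_comm, mul_comm (Real.Gamma _)]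
  refine div_le_div_of_nonneg_left (by positivity) (by positivity)
    (mul_le_mul_of_nonneg_left ?_ (by positivity))
  rw [add_right_comm]
  exact Real.Gamma_le_Gamma_add_nat (by linarith) n

lemma summable_besselITerm (hR : 0 < R) (hm : 0 ≤ m) : Summable (besselITerm m R) :=
  .of_nonneg_of_le (fun n => (besselITerm_pos hR hm n).le) (besselITerm_le hR hm)
    ((Real.summable_pow_div_factorial _).mul_left _)

lemma besselI_pos (hR : 0 < R) (hm : 0 ≤ m) : 0 < besselI m R :=
  (summable_besselITerm hR hm).tsum_pos (fun n => (besselITerm_pos hR hm n).le) 0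
    (besselITerm_pos hR hm 0)

lemma rpow_div_Gamma_le_besselI (hR : 0 < R) (hm : 0 ≤ m) :
    (R / 2) ^ m / Real.Gamma (m + 1) ≤ besselI m R := by
  rw [← besselITerm_zero]
  exact (summable_besselITerm hR hm).le_tsum 0 fun n _ => (besselITerm_pos hR hm n).le

lemma besselI_le_rpow_div_Gamma_mul_exp (hR : 0 < R) (hm : 0 ≤ m) :
    besselI m R ≤ (R / 2) ^ m / Real.Gamma (m + 1) * Real.exp ((R / 2) ^ 2) := by
  rw [Real.exp_eq_exp_ℝ, NormedSpace.exp_eq_tsum_div, ← tsum_mul_left]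
  exact (summable_besselITerm hR hm).tsum_le_tsum (besselITerm_le hR hm)
    ((Real.summable_pow_div_factorial _).mul_left _)

lemma besselITerm_succ_recurrence (hR : 0 < R) (hm : 0 ≤ m) (n : ℕ) :
    R * besselITerm m R (n + 1)
      = R * besselITerm (m + 2) R n + 2 * (m + 1) * besselITerm (m + 1) R (n + 1) := by
  have hy : 0 < R / 2 := by positivity
  have hΓ : 0 < Real.Gamma (m + n + 2) := Real.Gamma_pos_of_pos (by positivity)
  simp only [besselITerm, Real.rpow_add_two_mul hy, Real.rpow_add hy, Real.rpow_one,
    Nat.factorial_succ]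
  rw [show (R / 2) ^ (2 : ℝ) = (R / 2) ^ 2 from Real.rpow_two _]
  push_cast
  rw [show m + (n + 1 : ℝ) + 1 = m + n + 2 by ring, show m + 2 + n + 1 = m + n + 2 + 1 by ring,
    show m + 1 + (n + 1 : ℝ) + 1 = m + n + 2 + 1 by ring,
    Real.Gamma_add_one (s := m + n + 2) (by positivity)]
  field_simp
  ring

lemma besselI_recurrence (hR : 0 < R) (hm : 0 ≤ m) :
    R * besselI m R = R * besselI (m + 2) R + 2 * (m + 1) * besselI (m + 1) R := by
  have hs := summable_besselITerm hR hm
  have hs₁ := summable_besselITerm hR (show 0 ≤ m + 1 by linarith)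
  have hs₂ := summable_besselITerm hR (show 0 ≤ m + 2 by linarith)
  have hzero : R * besselITerm m R 0 = 2 * (m + 1) * besselITerm (m + 1) R 0 := by
    have hΓ : 0 < Real.Gamma (m + 1) := Real.Gamma_pos_of_pos (by linarith)
    rw [besselITerm_zero, besselITerm_zero, Real.rpow_add (by positivity), Real.rpow_one,
      Real.Gamma_add_one (s := m + 1) (by positivity)]
    field_simp
  calc R * besselI m R = R * besselITerm m R 0 + ∑' n, R * besselITerm m R (n + 1) := by
        rw [besselI_eq_tsum, hs.tsum_eq_zero_add, mul_add, tsum_mul_left]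
    _ = 2 * (m + 1) * besselITerm (m + 1) R 0
          + ∑' n, (R * besselITerm (m + 2) R n + 2 * (m + 1) * besselITerm (m + 1) R (n + 1)) := by
        rw [hzero, tsum_congr (besselITerm_succ_recurrence hR hm)]
    _ = R * besselI (m + 2) R + 2 * (m + 1) * besselI (m + 1) R := by
        rw [(hs₂.mul_left R).tsum_add (((summable_nat_add_iff 1).mpr hs₁).mul_left _),
          tsum_mul_left, tsum_mul_left, besselI_eq_tsum (m + 1), hs₁.tsum_eq_zero_add,
          besselI_eq_tsum]
        ring

lemma besselITerm_mul_besselITerm (hR : 0 < R) {μ ν : ℝ} (hμ : 0 ≤ μ) (hν : 0 ≤ ν) {i j N : ℕ}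
    (hN : i + j = N) :
    besselITerm μ R i * besselITerm ν R j
      = (R / 2) ^ (μ + ν + 2 * (N : ℝ)) * (Ring.choose (ν + N) i * Ring.choose (μ + N) j)
        / (Real.Gamma (μ + N + 1) * Real.Gamma (ν + N + 1)) := by
  subst hN
  have hμΓ := Real.Gamma_add_nat_eq_factorial_mul_choose (a := μ + i + 1) (by positivity) j
  have hνΓ := Real.Gamma_add_nat_eq_factorial_mul_choose (a := ν + j + 1) (by positivity) i
  have hcμ := Real.choose_pos_of_sub_one_lt (x := μ + (i + j : ℕ)) (k := j) (by push_cast; linarith)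
  have hcν := Real.choose_pos_of_sub_one_lt (x := ν + (i + j : ℕ)) (k := i) (by push_cast; linarith)
  have hΓμ := Real.Gamma_pos_of_pos (show 0 < μ + i + 1 by positivity)
  have hΓν := Real.Gamma_pos_of_pos (show 0 < ν + j + 1 by positivity)
  push_cast at hcμ hcν ⊢
  rw [show μ + (i + j : ℝ) + 1 = μ + i + 1 + j by ring,
    show ν + (i + j : ℝ) + 1 = ν + j + 1 + i by ring, hμΓ, hνΓ,
    show μ + i + 1 + j - 1 = μ + (i + j) by ring, show ν + j + 1 + i - 1 = ν + (i + j) by ring,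
    show μ + ν + 2 * (i + j : ℝ) = (μ + 2 * i) + (ν + 2 * j) by ring, Real.rpow_add (by positivity)]
  unfold besselITerm
  field_simp

lemma hasSum_besselI_mul_besselI (hR : 0 < R) {μ ν : ℝ} (hμ : 0 ≤ μ) (hν : 0 ≤ ν) :
    HasSum (fun N : ℕ => (R / 2) ^ (μ + ν + 2 * (N : ℝ)) * Ring.choose (μ + ν + 2 * N) N
        / (Real.Gamma (μ + N + 1) * Real.Gamma (ν + N + 1)))
      (besselI μ R * besselI ν R) := by
  have hnorm : ∀ {m : ℝ}, 0 ≤ m → Summable fun n => ‖besselITerm m R n‖ := fun hm => by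
    simpa only [Real.norm_eq_abs] using (summable_besselITerm hR hm).abs
  have hdiag : ∀ N : ℕ, ∑ ij ∈ antidiagonal N, besselITerm μ R ij.1 * besselITerm ν R ij.2
      = (R / 2) ^ (μ + ν + 2 * (N : ℝ)) * Ring.choose (μ + ν + 2 * N) N
        / (Real.Gamma (μ + N + 1) * Real.Gamma (ν + N + 1)) := by
    intro N
    rw [sum_congr rfl fun ij hij =>
        besselITerm_mul_besselITerm hR hμ hν (mem_antidiagonal.mp hij), ← sum_div, ← mul_sum,
      ← Ring.add_choose_eq N (Commute.all _ _)]
    ring_nf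
  have hs := (summable_norm_sum_mul_antidiagonal_of_summable_norm (hnorm hμ) (hnorm hν)).of_norm
  rw [besselI_eq_tsum, besselI_eq_tsum,
    tsum_mul_tsum_eq_tsum_sum_antidiagonal_of_summable_norm (hnorm hμ) (hnorm hν)]
  simp only [hdiag] at hs ⊢
  exact hs.hasSum

lemma besselI_mul_besselI_add_one_lt (hR : 0 < R) {μ ν : ℝ} (hμ : 0 ≤ μ) (hμν : μ < ν) :
    besselI μ R * besselI (ν + 1) R < besselI (μ + 1) R * besselI ν R := by
  have hterm : ∀ N : ℕ,
      (R / 2) ^ (μ + (ν + 1) + 2 * (N : ℝ)) * Ring.choose (μ + (ν + 1) + 2 * N) N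
          / (Real.Gamma (μ + N + 1) * Real.Gamma (ν + 1 + N + 1))
        < (R / 2) ^ (μ + 1 + ν + 2 * (N : ℝ)) * Ring.choose (μ + 1 + ν + 2 * N) N
          / (Real.Gamma (μ + 1 + N + 1) * Real.Gamma (ν + N + 1)) := by
    -- the two terms differ only by the factor `(μ + N + 1) / (ν + N + 1) < 1`
    intro N
    have hc := Real.choose_pos_of_sub_one_lt (x := μ + 1 + ν + 2 * N) (k := N) (by linarith)
    have hΓμ := Real.Gamma_pos_of_pos (show 0 < μ + N + 1 by positivity)
    have hΓν := Real.Gamma_pos_of_pos (show 0 < ν + N + 1 by linarith)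
    rw [show μ + (ν + 1) = μ + 1 + ν by ring, show ν + 1 + N + 1 = (ν + N + 1) + 1 by ring,
      show μ + 1 + N + 1 = (μ + N + 1) + 1 by ring,
      Real.Gamma_add_one (s := μ + N + 1) (by positivity),
      Real.Gamma_add_one (s := ν + N + 1) (by linarith)]
    refine div_lt_div_of_pos_left (by positivity) (by positivity) ?_
    nlinarith [mul_pos hΓμ hΓν]
  exact hasSum_lt (fun N => (hterm N).le) (hterm 0) (hasSum_besselI_mul_besselI hR hμ (by linarith))
    (hasSum_besselI_mul_besselI hR (by linarith) (by linarith))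

lemma jfun_eq (hR : 0 < R) (k : ℕ) :
    jfun k R
      = (besselI (5 / 2) R * besselI (k + 1 / 2) R - besselI (3 / 2) R * besselI (k + 3 / 2) R)
        / (besselI (1 / 2) R * besselI (k + 1 / 2) R) := by
  have hrec := besselI_recurrence hR (m := 1 / 2) (by norm_num)
  have hA := besselI_pos hR (m := 1 / 2) (by norm_num)
  have hD := besselI_pos hR (m := k + 1 / 2) (by positivity)
  norm_num at hrec
  unfold jfun
  set A := besselI (1 / 2) R
  set D := besselI (k + 1 / 2) R
  field_simp
  linear_combination D * hrec

lemma jfun_pos (hR : 0 < R) {k : ℕ} (hk : 2 ≤ k) : 0 < jfun k R := by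
  have hk' : (2 : ℝ) ≤ k := by exact_mod_cast hk
  have hturan := besselI_mul_besselI_add_one_lt hR (μ := 3 / 2) (ν := k + 1 / 2) (by norm_num)
    (by linarith)
  rw [show (k : ℝ) + 1 / 2 + 1 = k + 3 / 2 by ring, show (3 / 2 : ℝ) + 1 = 5 / 2 by norm_num]
    at hturan
  rw [jfun_eq hR]
  exact div_pos (by linarith)
    (mul_pos (besselI_pos hR (by norm_num)) (besselI_pos hR (by positivity)))

lemma jfun_lt_one (hR : 0 < R) (k : ℕ) : jfun k R < 1 := by
  have hA := besselI_pos hR (m := 1 / 2) (by norm_num)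
  have hB := besselI_pos hR (m := 3 / 2) (by norm_num)
  have hD := besselI_pos hR (m := k + 1 / 2) (by positivity)
  have hE := besselI_pos hR (m := k + 3 / 2) (by positivity)
  have h₁ : 0 < 3 * besselI (3 / 2) R / (R * besselI (1 / 2) R) := by positivity
  have h₂ : 0 < besselI (3 / 2) R * besselI (k + 3 / 2) R
      / (besselI (1 / 2) R * besselI (k + 1 / 2) R) := by positivity
  unfold jfun
  linarith

lemma div_mul_exp_le_besselI_add_one_div (hR : 0 < R) (hm : 0 ≤ m) :
    R / 2 / ((m + 1) * Real.exp ((R / 2) ^ 2)) ≤ besselI (m + 1) R / besselI m R := by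
  have hy : 0 < R / 2 := by positivity
  have hΓ := Real.Gamma_pos_of_pos (show 0 < m + 1 by linarith)
  calc R / 2 / ((m + 1) * Real.exp ((R / 2) ^ 2))
      = (R / 2) ^ (m + 1) / Real.Gamma (m + 1 + 1)
          / ((R / 2) ^ m / Real.Gamma (m + 1) * Real.exp ((R / 2) ^ 2)) := by
        rw [Real.rpow_add_one hy.ne', Real.Gamma_add_one (s := m + 1) (by linarith)]
        field_simp
    _ ≤ besselI (m + 1) R / besselI m R :=
        div_le_div₀ (besselI_pos hR (by linarith)).le (rpow_div_Gamma_le_besselI hR (by linarith))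
          (besselI_pos hR hm) (besselI_le_rpow_div_Gamma_mul_exp hR hm)

lemma sub_one_div_le_hfun (hR : 0 < R) {k : ℕ} (hk : 1 ≤ k) :
    ((k : ℝ) - 1) / (4 * Real.exp ((R / 2) ^ 2)) ≤ hfun k R := by
  have hk' : (1 : ℝ) ≤ k := by exact_mod_cast hk
  have hE := Real.exp_pos ((R / 2) ^ 2)
  have hratio := div_mul_exp_le_besselI_add_one_div hR (m := k + 1 / 2) (by positivity)
  rw [show (k : ℝ) + 1 / 2 + 1 = k + 3 / 2 by ring] at hratio
  unfold hfun
  calc ((k : ℝ) - 1) / (4 * Real.exp ((R / 2) ^ 2))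
      ≤ (((k : ℝ) ^ 2 + k) / 2 - 1) * (R / 2 / ((k + 3 / 2) * Real.exp ((R / 2) ^ 2)) / R) := by
        rw [div_le_iff₀ (by positivity)]
        field_simp
        nlinarith
    _ ≤ (((k : ℝ) ^ 2 + k) / 2 - 1) * (besselI (k + 3 / 2) R / (R * besselI (k + 1 / 2) R)) := by
        rw [div_mul_eq_div_div_swap (a := besselI _ R)]
        exact mul_le_mul_of_nonneg_left (div_le_div_of_nonneg_right hratio hR.le) (by nlinarith)

lemma tendsto_hfun_atTop (hR : 0 < R) : Tendsto (fun k => hfun k R) atTop atTop := by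
  refine tendsto_atTop_mono' _
    ((eventually_ge_atTop 1).mono fun k hk => sub_one_div_le_hfun hR hk) ?_
  exact (tendsto_atTop_add_const_right _ (-1) tendsto_natCast_atTop_atTop).atTop_div_const
    (by positivity)

lemma hfun_pos (hR : 0 < R) {k : ℕ} (hk : 2 ≤ k) : 0 < hfun k R := by
  have hk' : (2 : ℝ) ≤ k := by exact_mod_cast hk
  exact (div_pos (by linarith) (by positivity)).trans_le (sub_one_div_le_hfun hR (by omega))

lemma gammafun_pos (hR : 0 < R) {k : ℕ} (hk : 2 ≤ k) : 0 < gammafun k R :=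
  div_pos (mul_pos (jfun_pos hR hk) hR) (add_pos (hfun_pos hR hk) (jfun_pos hR hk))

lemma gammafun_le_div_hfun (hR : 0 < R) {k : ℕ} (hk : 2 ≤ k) : gammafun k R ≤ R / hfun k R := by
  have hj := jfun_pos hR hk
  have hj₁ := jfun_lt_one hR k
  have hh := hfun_pos hR hk
  rw [gammafun, div_le_div_iff₀ (by positivity) hh]
  nlinarith [mul_pos hR hh]

end

/-- For every `k ≥ 2`, `γ_k(R) > 0`, and `γ_k(R) → 0` as `k → ∞`. -/
theorem stmt7 (R : ℝ) (hR : 0 < R) :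
    (∀ k : ℕ, 2 ≤ k → 0 < gammafun k R) ∧
    Filter.Tendsto (fun k : ℕ => gammafun k R) Filter.atTop (nhds 0) := by
  refine ⟨fun k hk => gammafun_pos hR hk, ?_⟩
  refine squeeze_zero' ((eventually_ge_atTop 2).mono fun k hk => (gammafun_pos hR hk).le)
    ((eventually_ge_atTop 2).mono fun k hk => gammafun_le_div_hfun hR hk) ?_
  exact tendsto_const_nhds.div_atTop (tendsto_hfun_atTop hR)
end

section
/- Fix γ ∈ ℝ and define f(R) := (1 − γ/R)·(R·coth R − 1)/R² for R > 0. Then for every R > 0, f'(R) = −(1/R²)·[γ·(h_0(R) + j_0(R)) − j_0(R)·R]; consequently, for μ, σ̄ > 0, the eigenvalue Λ_0(γ) := (μσ̄/R)·[γ·(h_0(R) + j_0(R)) − j_0(R)·R] satisfies Λ_0(γ) = −μσ̄·R·f'(R). -/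
/-- The stationary radius function `f(R) = (1 - γ/R)·(R·coth R - 1)/R²`. -/
noncomputable def statf (γ R : ℝ) : ℝ :=
  (1 - γ / R) * (R * (Real.cosh R / Real.sinh R) - 1) / R ^ 2

open Real Nat

noncomputable def langevin (r : ℝ) : ℝ :=
  cosh r / sinh r - 1 / r

lemma factorial_mul_Gamma_add_three_halves (k : ℕ) :
    (k ! : ℝ) * Gamma (k + 3 / 2) = √π * (2 * k + 1)! / 2 ^ (2 * k + 1) := by
  have h := Gamma_mul_Gamma_add_half ((k : ℝ) + 1)
  rw [Gamma_nat_eq_factorial, show (k : ℝ) + 1 + 1 / 2 = k + 3 / 2 by ring,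
    show 2 * ((k : ℝ) + 1) = ((2 * k + 1 : ℕ) : ℝ) + 1 by push_cast; ring, Gamma_nat_eq_factorial,
    show (1 : ℝ) - (((2 * k + 1 : ℕ) : ℝ) + 1) = -((2 * k + 1 : ℕ) : ℝ) by ring, rpow_neg zero_le_two,
    rpow_natCast] at h
  rw [h]
  field_simp

lemma hasSum_sinh_div_self {r : ℝ} (hr : r ≠ 0) :
    HasSum (fun n : ℕ => r ^ (2 * n) / ((2 * n + 1)! : ℝ)) (sinh r / r) := by
  have h : HasSum (fun n : ℕ => r ^ (2 * n + 1) / ((2 * n + 1)! : ℝ) / r) (sinh r / r) :=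
    (hasSum_sinh r).div_const r
  convert h using 2 with n
  rw [pow_succ]
  field_simp

lemma hasSum_cosh_sub_sinh_div_self {r : ℝ} (hr : r ≠ 0) :
    HasSum (fun n : ℕ => 2 * (n + 1) * r ^ (2 * n) / ((2 * n + 3)! : ℝ))
      ((cosh r - sinh r / r) / r ^ 2) := by
  have h := (hasSum_cosh r).sub (hasSum_sinh_div_self hr)
  rw [← hasSum_nat_add_iff' 1] at h
  simp only [Finset.range_one, Finset.sum_singleton, mul_zero, zero_add, pow_zero, factorial_zero,
    factorial_one, cast_one, div_one, sub_self, sub_zero] at h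
  have h' : HasSum (fun n : ℕ => (r ^ (2 * (n + 1)) / ((2 * (n + 1))! : ℝ)
      - r ^ (2 * (n + 1)) / ((2 * (n + 1) + 1)! : ℝ)) / r ^ 2) ((cosh r - sinh r / r) / r ^ 2) :=
    h.div_const (r ^ 2)
  convert h' using 2 with n
  rw [show 2 * (n + 1) + 1 = 2 * n + 3 by ring, show 2 * (n + 1) = 2 * n + 2 by ring,
    factorial_succ (2 * n + 2), pow_succ, pow_succ]
  push_cast
  field_simp
  ring

lemma besselI_eq_rpow_mul_tsum (m : ℝ) {r : ℝ} (hr : 0 < r) :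
    besselI m r = (r / 2) ^ m * ∑' n : ℕ, (r / 2) ^ (2 * n) / (n ! * Gamma (m + n + 1)) := by
  rw [besselI, ← tsum_mul_left]
  refine tsum_congr fun n => ?_
  rw [rpow_add (by positivity), show 2 * (n : ℝ) = ((2 * n : ℕ) : ℝ) by push_cast; ring,
    rpow_natCast, mul_div_assoc]

lemma besselI_one_half {r : ℝ} (hr : 0 < r) :
    besselI (1 / 2) r = (r / 2) ^ (1 / 2 : ℝ) * (2 / √π * (sinh r / r)) := by
  rw [besselI_eq_rpow_mul_tsum _ hr, ← ((hasSum_sinh_div_self hr.ne').mul_left _).tsum_eq]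
  congr 1
  refine tsum_congr fun n => ?_
  rw [show (1 / 2 : ℝ) + n + 1 = n + 3 / 2 by ring, factorial_mul_Gamma_add_three_halves, div_pow]
  field_simp
  ring

lemma besselI_three_halves {r : ℝ} (hr : 0 < r) :
    besselI (3 / 2) r = (r / 2) ^ (3 / 2 : ℝ) * (4 / √π * ((cosh r - sinh r / r) / r ^ 2)) := by
  rw [besselI_eq_rpow_mul_tsum _ hr, ← ((hasSum_cosh_sub_sinh_div_self hr.ne').mul_left _).tsum_eq]
  congr 1
  refine tsum_congr fun n => ?_
  have h := factorial_mul_Gamma_add_three_halves (n + 1)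
  rw [factorial_succ, show ((n + 1 : ℕ) : ℝ) + 3 / 2 = 3 / 2 + n + 1 by push_cast; ring,
    show 2 * (n + 1) + 1 = 2 * n + 3 by ring] at h
  push_cast at h
  have hΓ : (n ! : ℝ) * Gamma (3 / 2 + n + 1) = √π * (2 * n + 3)! / 2 ^ (2 * n + 3) / (n + 1) := by
    rw [← h]; field_simp
  rw [hΓ, div_pow]
  field_simp
  ring

lemma besselI_three_halves_div_one_half {r : ℝ} (hr : 0 < r) :
    besselI (3 / 2) r / besselI (1 / 2) r = langevin r := by
  have hsinh := (sinh_pos_iff.2 hr).ne'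
  rw [besselI_one_half hr, besselI_three_halves hr, langevin,
    show (3 / 2 : ℝ) = 1 + 1 / 2 by norm_num, rpow_add (by positivity), rpow_one]
  field_simp
  ring

lemma hfun_zero {R : ℝ} (hR : 0 < R) : hfun 0 R = -langevin R / R := by
  rw [hfun, ← besselI_three_halves_div_one_half hR]
  simp only [CharP.cast_eq_zero, zero_add]
  ring

lemma jfun_zero {R : ℝ} (hR : 0 < R) :
    jfun 0 R = 1 - 3 * langevin R / R - langevin R ^ 2 := by
  rw [jfun, ← besselI_three_halves_div_one_half hR]
  simp only [CharP.cast_eq_zero, zero_add]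
  ring

lemma hasDerivAt_langevin {r : ℝ} (hr : r ≠ 0) :
    HasDerivAt langevin (1 - langevin r ^ 2 - 2 * langevin r / r) r := by
  have hsinh : sinh r ≠ 0 := sinh_ne_zero.2 hr
  have h : HasDerivAt (fun x => cosh x / sinh x - x⁻¹)
      ((sinh r * sinh r - cosh r * cosh r) / sinh r ^ 2 - -(r ^ 2)⁻¹) r :=
    ((hasDerivAt_cosh r).div (hasDerivAt_sinh r) hsinh).sub (hasDerivAt_inv hr)
  convert h using 1
  · funext x
    simp only [langevin, one_div]
  · simp only [langevin]
    field_simp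
    ring

lemma statf_eq_langevin (γ R : ℝ) : statf γ R = (1 - γ / R) * langevin R / R := by
  rcases eq_or_ne R 0 with rfl | hR
  · simp [statf]
  · rw [statf, langevin]
    field_simp

lemma hasDerivAt_statf (γ : ℝ) {R L' : ℝ} (hL : HasDerivAt langevin L' R) (hR : R ≠ 0) :
    HasDerivAt (statf γ)
      ((L' - langevin R / R) / R - γ * (L' - 2 * langevin R / R) / R ^ 2) R := by
  have h : HasDerivAt (fun x => (1 - γ * x⁻¹) * langevin x / x)
      (((-(γ * -(R ^ 2)⁻¹) * langevin R + (1 - γ * R⁻¹) * L') * R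
        - (1 - γ * R⁻¹) * langevin R * 1) / R ^ 2) R :=
    ((((hasDerivAt_inv hR).const_mul γ).const_sub 1).mul hL).div (hasDerivAt_id R) hR
  rw [show statf γ = fun x => (1 - γ * x⁻¹) * langevin x / x from
    funext fun x => by rw [statf_eq_langevin, div_eq_mul_inv γ]]
  convert h using 1
  field_simp
  ring

theorem stmt15_general (γ R μ σb : ℝ) (hR : 0 < R) :
    deriv (statf γ) R = -(1 / R ^ 2) * (γ * (hfun 0 R + jfun 0 R) - jfun 0 R * R) ∧
    (μ * σb / R) * (γ * (hfun 0 R + jfun 0 R) - jfun 0 R * R)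
      = -μ * σb * R * deriv (statf γ) R := by
  have hderiv : deriv (statf γ) R = -(1 / R ^ 2) * (γ * (hfun 0 R + jfun 0 R) - jfun 0 R * R) := by
    rw [(hasDerivAt_statf γ (hasDerivAt_langevin hR.ne') hR.ne').deriv, hfun_zero hR, jfun_zero hR]
    field_simp
    ring
  refine ⟨hderiv, ?_⟩
  rw [hderiv]
  field_simp

/-- `f'(R) = -(1/R²)[γ(h_0(R)+j_0(R)) - j_0(R)R]`; consequently
`Λ_0(γ) = (μσ̄/R)[γ(h_0+j_0) - j_0 R] = -μσ̄·R·f'(R)`. -/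
theorem stmt15 (γ R μ σb : ℝ) (hR : 0 < R) (hμ : 0 < μ) (hσb : 0 < σb) :
    deriv (statf γ) R = -(1 / R ^ 2) * (γ * (hfun 0 R + jfun 0 R) - jfun 0 R * R) ∧
    (μ * σb / R) * (γ * (hfun 0 R + jfun 0 R) - jfun 0 R * R)
      = -μ * σb * R * deriv (statf γ) R :=
  stmt15_general γ R μ σb hR
end
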